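/- Let t_min = −(3/2)·∫₀¹ x^{3/2}(2 − x³)^{−5/2} dx (a finite negative real number). There exists a differentiable, strictly increasing function u : (t_min, +∞) → ℝ with u(0) = 1, 0 < u(t) < 2^{1/3} for all t, satisfying u'(t) = (2/3)·(2 − u(t)³)^{5/2}·u(t)^{−3/2} for all t ∈ (t_min, +∞), and such that lim_{t → t_min⁺} u(t) = 0 and lim_{t → +∞} u(t) = 2^{1/3}; in particular u is a bijection from (t_min, +∞) onto (0, 2^{1/3}). -/

import Mathlib

/-!
Separation of variables: the solution is the inverse of the arrival time
`T y = (3/2) ∫₁ʸ x^{3/2} (2 - x³)^{-5/2} dx`, whose derivative `(3/2) x^{3/2} (2 - x³)^{-5/2}` is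
the reciprocal of the right-hand side. `T` increases strictly on `[0, 2^{1/3})` from `T 0 = t_min`,
and `T y → +∞` as `y → 2^{1/3}` because near `2^{1/3}` the integrand dominates a multiple of
`3x² / (2 - x³)`, whose primitive `-log (2 - x³)` diverges. Hence `T⁻¹ : (t_min, ∞) → (0, 2^{1/3})`
is a strictly increasing solution, and `T 1 = 0` gives the initial condition.
-/

open MeasureTheory Filter Set

noncomputable def tmin : ℝ :=
  -(3 / 2 : ℝ) * ∫ x in Set.Ioo (0 : ℝ) 1, x ^ ((3 : ℝ) / 2) * (2 - x ^ 3) ^ (-(5 : ℝ) / 2)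

open Topology

section InverseFunction

variable {α β : Type*} [LinearOrder α] [LinearOrder β]

theorem StrictMonoOn.strictMonoOn_of_invOn {f : α → β} {u : β → α} {s : Set α} {t : Set β}
    (hf : StrictMonoOn f s) (hinv : InvOn u f s t) (hu : MapsTo u t s) : StrictMonoOn u t := by
  intro x hx y hy hxy
  rw [← hf.lt_iff_lt (hu hx) (hu hy), hinv.2 hx, hinv.2 hy]
  exact hxy

end InverseFunction

section InverseFunctionReal

variable {f f' u : ℝ → ℝ} {a b t₀ : ℝ}

theorem StrictMonoOn.bijOn_Ioo_Ioi (hab : a < b) (hf : StrictMonoOn f (Ico a b))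
    (hcont : ContinuousOn f (Ico a b)) (htop : Tendsto f (𝓝[<] b) atTop) :
    BijOn f (Ioo a b) (Ioi (f a)) := by
  refine ⟨fun y hy => hf (left_mem_Ico.2 hab) (Ioo_subset_Ico_self hy) hy.1,
    hf.injOn.mono Ioo_subset_Ico_self, ?_⟩
  have hleft : 𝓝[>] a ≤ 𝓟 (Ioo a b) := by
    rw [← nhdsWithin_Ioo_eq_nhdsGT hab]; exact inf_le_right
  have hright : 𝓝[<] b ≤ 𝓟 (Ioo a b) := by
    rw [← nhdsWithin_Ioo_eq_nhdsLT hab]; exact inf_le_right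
  have hlim : Tendsto f (𝓝[>] a) (𝓝 (f a)) := by
    rw [← nhdsWithin_Ioo_eq_nhdsGT hab]
    exact ((hcont a (left_mem_Ico.2 hab)).mono Ioo_subset_Ico_self).tendsto
  exact isPreconnected_Ioo.intermediate_value_Ioi hleft hright
    (hcont.mono Ioo_subset_Ico_self) hlim htop

theorem MonotoneOn.tendsto_nhdsGT_of_image_eq (hab : a < b) (hu : MonotoneOn u (Ioi t₀))
    (himage : u '' Ioi t₀ = Ioo a b) : Tendsto u (𝓝[>] t₀) (𝓝 a) := by
  have := hu.tendsto_nhdsGT (by rw [himage]; exact bddBelow_Ioo)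
  rwa [himage, csInf_Ioo hab] at this

theorem MonotoneOn.tendsto_atTop_of_image_eq (hab : a < b) (hu : MonotoneOn u (Ioi t₀))
    (himage : u '' Ioi t₀ = Ioo a b) : Tendsto u atTop (𝓝 b) := by
  refine tendsto_order.2 ⟨fun b' hb' => ?_, fun b' hb' => ?_⟩
  · obtain ⟨y, hy, hyb⟩ := exists_between (max_lt hab hb')
    obtain ⟨s, hs, rfl⟩ : y ∈ u '' Ioi t₀ := by
      rw [himage]; exact ⟨(le_max_left _ _).trans_lt hy, hyb⟩
    filter_upwards [eventually_ge_atTop s] with t ht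
    exact ((le_max_right _ _).trans_lt hy).trans_le (hu hs (lt_of_lt_of_le hs ht) ht)
  · filter_upwards [eventually_gt_atTop t₀] with t ht
    exact (himage ▸ mem_image_of_mem u ht : u t ∈ Ioo a b).2.trans hb'

theorem exists_inverse_of_hasDerivAt_pos (hab : a < b) (hcont : ContinuousOn f (Ico a b))
    (hderiv : ∀ y ∈ Ioo a b, HasDerivAt f (f' y) y) (hpos : ∀ y ∈ Ioo a b, 0 < f' y)
    (htop : Tendsto f (𝓝[<] b) atTop) :
    ∃ u : ℝ → ℝ, InvOn u f (Ioo a b) (Ioi (f a)) ∧ BijOn u (Ioi (f a)) (Ioo a b) ∧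
      StrictMonoOn u (Ioi (f a)) ∧ (∀ t ∈ Ioi (f a), HasDerivAt u (f' (u t))⁻¹ t) ∧
      Tendsto u (𝓝[>] f a) (𝓝 a) ∧ Tendsto u atTop (𝓝 b) := by
  have hmono : StrictMonoOn f (Ico a b) :=
    strictMonoOn_of_deriv_pos (convex_Ico a b) hcont fun y hy => by
      rw [interior_Ico] at hy
      rw [(hderiv y hy).deriv]
      exact hpos y hy
  have hbij := hmono.bijOn_Ioo_Ioi hab hcont htop
  set u := Function.invFunOn f (Ioo a b)
  have hinv : InvOn u f (Ioo a b) (Ioi (f a)) := hbij.invOn_invFunOn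
  have hubij : BijOn u (Ioi (f a)) (Ioo a b) := hbij.symm hinv.symm
  have humono : StrictMonoOn u (Ioi (f a)) :=
    (hmono.mono Ioo_subset_Ico_self).strictMonoOn_of_invOn hinv hubij.mapsTo
  refine ⟨u, hinv, hubij, humono, fun t ht => ?_,
    humono.monotoneOn.tendsto_nhdsGT_of_image_eq hab hubij.image_eq,
    humono.monotoneOn.tendsto_atTop_of_image_eq hab hubij.image_eq⟩
  have hut := hubij.mapsTo ht
  have hcontu : ContinuousAt u t := humono.continuousAt_of_image_mem_nhds
    (isOpen_Ioi.mem_nhds ht) (by rw [hubij.image_eq]; exact isOpen_Ioo.mem_nhds hut)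
  exact (hderiv _ hut).of_local_left_inverse hcontu (hpos _ hut).ne'
    (eventually_of_mem (isOpen_Ioi.mem_nhds ht) hinv.2)

end InverseFunctionReal

local notation "∛2" => (2 : ℝ) ^ ((1 : ℝ) / 3)

theorem one_lt_cbrt_two : 1 < ∛2 := Real.one_lt_rpow one_lt_two (by norm_num)

theorem cbrt_two_lt_two : ∛2 < 2 := by
  simpa using Real.rpow_lt_rpow_of_exponent_lt one_lt_two (show (1 : ℝ) / 3 < 1 by norm_num)

theorem cbrt_two_pow_three : ∛2 ^ 3 = 2 := by
  rw [← Real.rpow_natCast, ← Real.rpow_mul zero_le_two]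
  norm_num

theorem two_sub_pow_three_pos {x : ℝ} (hx₀ : 0 ≤ x) (hx : x < ∛2) : 0 < 2 - x ^ 3 := by
  have := pow_lt_pow_left₀ hx hx₀ three_ne_zero
  rw [cbrt_two_pow_three] at this
  linarith

noncomputable def tminIntegrand (x : ℝ) : ℝ := x ^ ((3 : ℝ) / 2) * (2 - x ^ 3) ^ (-(5 : ℝ) / 2)

noncomputable def arrivalTime (y : ℝ) : ℝ := 3 / 2 * ∫ x in (1 : ℝ)..y, tminIntegrand x

theorem continuousAt_tminIntegrand {x : ℝ} (hx : x ∈ Ico 0 ∛2) : ContinuousAt tminIntegrand x :=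
  (Real.continuousAt_rpow_const x _ (Or.inr (by norm_num))).mul
    ((continuous_const.sub (continuous_pow 3)).continuousAt.rpow_const
      (Or.inl (two_sub_pow_three_pos hx.1 hx.2).ne'))

theorem tminIntegrand_pos {x : ℝ} (hx : x ∈ Ioo 0 ∛2) : 0 < tminIntegrand x :=
  mul_pos (Real.rpow_pos_of_pos hx.1 _)
    (Real.rpow_pos_of_pos (two_sub_pow_three_pos hx.1.le hx.2) _)

theorem intervalIntegrable_tminIntegrand {a b : ℝ} (ha : a ∈ Ico 0 ∛2) (hb : b ∈ Ico 0 ∛2) :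
    IntervalIntegrable tminIntegrand volume a b :=
  ContinuousOn.intervalIntegrable fun _ hx =>
    (continuousAt_tminIntegrand (ordConnected_Ico.uIcc_subset ha hb hx)).continuousWithinAt

theorem hasDerivAt_arrivalTime {y : ℝ} (hy : y ∈ Ioo 0 ∛2) :
    HasDerivAt arrivalTime (3 / 2 * tminIntegrand y) y :=
  (intervalIntegral.integral_hasDerivAt_right
    (intervalIntegrable_tminIntegrand ⟨zero_le_one, one_lt_cbrt_two⟩ (Ioo_subset_Ico_self hy))
    (ContinuousAt.stronglyMeasurableAtFilter isOpen_Ioo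
      (fun _ hx => continuousAt_tminIntegrand (Ioo_subset_Ico_self hx)) y hy)
    (continuousAt_tminIntegrand (Ioo_subset_Ico_self hy))).const_mul _

theorem continuousOn_arrivalTime : ContinuousOn arrivalTime (Ico 0 ∛2) := by
  intro x hx
  obtain ⟨b, hxb, hb⟩ := exists_between (max_lt hx.2 one_lt_cbrt_two)
  have hb₀ : 0 ≤ b := le_trans zero_le_one ((le_max_right _ _).trans hxb.le)
  have hcont : ContinuousOn arrivalTime (Icc 0 b) := by
    have := intervalIntegral.continuousOn_primitive_interval' (a := 1)
      (intervalIntegrable_tminIntegrand (left_mem_Ico.2 (by linarith [one_lt_cbrt_two])) ⟨hb₀, hb⟩)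
      (by rw [uIcc_of_le hb₀]; exact ⟨zero_le_one, (le_max_right _ _).trans hxb.le⟩)
    rw [uIcc_of_le hb₀] at this
    exact this.const_smul (3 / 2 : ℝ)
  refine (hcont x ⟨hx.1, (le_max_left _ _).trans hxb.le⟩).mono_of_mem_nhdsWithin ?_
  exact mem_nhdsWithin.2 ⟨Iio b, isOpen_Iio, (le_max_left _ _).trans_lt hxb,
    fun z hz => ⟨hz.2.1, le_of_lt hz.1⟩⟩

theorem arrivalTime_zero : arrivalTime 0 = tmin := by
  rw [arrivalTime, intervalIntegral.integral_symm, intervalIntegral.integral_of_le zero_le_one,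
    integral_Ioc_eq_integral_Ioo, tmin]
  simp only [tminIntegrand]
  ring

theorem arrivalTime_one : arrivalTime 1 = 0 := by simp [arrivalTime]

theorem hasDerivAt_neg_log_two_sub_pow_three {x : ℝ} (hx : 2 - x ^ 3 ≠ 0) :
    HasDerivAt (fun y => -Real.log (2 - y ^ 3)) (3 * x ^ 2 / (2 - x ^ 3)) x := by
  refine (((hasDerivAt_pow 3 x).const_sub 2).log hx).neg.congr_deriv ?_
  push_cast
  ring

theorem le_twelve_mul_tminIntegrand {x : ℝ} (hx₁ : 1 ≤ x) (hx : x < ∛2) :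
    3 * x ^ 2 / (2 - x ^ 3) ≤ 12 * tminIntegrand x := by
  have hpos := two_sub_pow_three_pos (zero_le_one.trans hx₁) hx
  have hle : 2 - x ^ 3 ≤ 1 := by nlinarith [one_le_pow₀ (n := 3) hx₁]
  have hpow : (2 - x ^ 3)⁻¹ ≤ (2 - x ^ 3) ^ (-(5 : ℝ) / 2) := by
    rw [← Real.rpow_neg_one]
    exact Real.rpow_le_rpow_of_exponent_ge hpos hle (by norm_num)
  have hx2 : x ^ 2 ≤ 4 := by nlinarith [cbrt_two_lt_two]
  calc 3 * x ^ 2 / (2 - x ^ 3) ≤ 12 * (2 - x ^ 3)⁻¹ := by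
        rw [div_eq_mul_inv]; gcongr; linarith
    _ ≤ 12 * (1 * (2 - x ^ 3) ^ (-(5 : ℝ) / 2)) := by rw [one_mul]; gcongr
    _ ≤ 12 * tminIntegrand x := by
        unfold tminIntegrand
        gcongr
        exact Real.one_le_rpow hx₁ (by norm_num)

theorem neg_log_le_arrivalTime {y : ℝ} (hy₁ : 1 ≤ y) (hy : y < ∛2) :
    -Real.log (2 - y ^ 3) ≤ 8 * arrivalTime y := by
  have hIcc : ∀ x ∈ Icc 1 y, 1 ≤ x ∧ x < ∛2 := fun x hx => ⟨hx.1, hx.2.trans_lt hy⟩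
  have hderiv : ∀ x ∈ uIcc 1 y, HasDerivAt (fun y => -Real.log (2 - y ^ 3))
      (3 * x ^ 2 / (2 - x ^ 3)) x := by
    rw [uIcc_of_le hy₁]
    intro x hx
    exact hasDerivAt_neg_log_two_sub_pow_three
      (two_sub_pow_three_pos (zero_le_one.trans (hIcc x hx).1) (hIcc x hx).2).ne'
  have hint : IntervalIntegrable (fun x => 3 * x ^ 2 / (2 - x ^ 3)) volume 1 y :=
    ContinuousOn.intervalIntegrable fun x hx => by
      rw [uIcc_of_le hy₁] at hx
      have := two_sub_pow_three_pos (zero_le_one.trans (hIcc x hx).1) (hIcc x hx).2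
      fun_prop (disch := positivity)
  have hmono := intervalIntegral.integral_mono_on hy₁ hint
    ((intervalIntegrable_tminIntegrand ⟨zero_le_one, one_lt_cbrt_two⟩
      ⟨zero_le_one.trans hy₁, hy⟩).const_mul 12)
    fun x hx => le_twelve_mul_tminIntegrand (hIcc x hx).1 (hIcc x hx).2
  rw [intervalIntegral.integral_eq_sub_of_hasDerivAt hderiv hint,
    intervalIntegral.integral_const_mul] at hmono
  rw [one_pow, show (2 : ℝ) - 1 = 1 by norm_num, Real.log_one, neg_zero, sub_zero] at hmono
  rw [arrivalTime]
  linarith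

theorem tendsto_arrivalTime_atTop : Tendsto arrivalTime (𝓝[<] ∛2) atTop := by
  have hbase : Tendsto (fun y => 2 - y ^ 3) (𝓝[<] ∛2) (𝓝[>] 0) := by
    refine tendsto_nhdsWithin_of_tendsto_nhds_of_eventually_within _ ?_ ?_
    · have : Tendsto (fun y : ℝ => 2 - y ^ 3) (𝓝 ∛2) (𝓝 (2 - ∛2 ^ 3)) :=
        (continuous_const.sub (continuous_pow 3)).tendsto _
      rw [cbrt_two_pow_three, sub_self] at this
      exact this.mono_left nhdsWithin_le_nhds
    · filter_upwards [Ioo_mem_nhdsLT one_lt_cbrt_two] with y hy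
      exact two_sub_pow_three_pos (zero_le_one.trans hy.1.le) hy.2
  have hlog : Tendsto (fun y => -Real.log (2 - y ^ 3) / 8) (𝓝[<] ∛2) atTop :=
    (tendsto_neg_atBot_atTop.comp (Real.tendsto_log_nhdsGT_zero.comp hbase)).atTop_div_const
      (by norm_num)
  refine tendsto_atTop_mono' _ ?_ hlog
  filter_upwards [Ioo_mem_nhdsLT one_lt_cbrt_two] with y hy
  have := neg_log_le_arrivalTime hy.1.le hy.2
  linarith

theorem inv_three_halves_mul_tminIntegrand {y : ℝ} (hy : 0 ≤ y) (h : 0 ≤ 2 - y ^ 3) :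
    (3 / 2 * tminIntegrand y)⁻¹ = 2 / 3 * (2 - y ^ 3) ^ ((5 : ℝ) / 2) * y ^ (-(3 : ℝ) / 2) := by
  rw [tminIntegrand, neg_div, neg_div, Real.rpow_neg hy, Real.rpow_neg h, mul_inv, mul_inv, inv_inv]
  ring

theorem exists_maximal_solution_u :
    ∃ u : ℝ → ℝ,
      u 0 = 1 ∧
      StrictMonoOn u (Ioi tmin) ∧
      (∀ t ∈ Ioi tmin, 0 < u t ∧ u t < (2 : ℝ) ^ ((1 : ℝ) / 3)) ∧
      (∀ t ∈ Ioi tmin,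
        HasDerivAt u ((2 / 3) * (2 - u t ^ 3) ^ ((5 : ℝ) / 2) * u t ^ (-(3 : ℝ) / 2)) t) ∧
      Tendsto u (nhdsWithin tmin (Ioi tmin)) (nhds 0) ∧
      Tendsto u atTop (nhds ((2 : ℝ) ^ ((1 : ℝ) / 3))) ∧
      Set.BijOn u (Ioi tmin) (Ioo 0 ((2 : ℝ) ^ ((1 : ℝ) / 3))) := by
  obtain ⟨u, hinv, hbij, hmono, hderiv, hleft, hright⟩ :=
    exists_inverse_of_hasDerivAt_pos (zero_lt_one.trans one_lt_cbrt_two) continuousOn_arrivalTime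
      (fun _ hy => hasDerivAt_arrivalTime hy)
      (fun _ hy => mul_pos (by norm_num) (tminIntegrand_pos hy)) tendsto_arrivalTime_atTop
  rw [arrivalTime_zero] at hinv hbij hmono hderiv hleft
  refine ⟨u, ?_, hmono, fun t ht => hbij.mapsTo ht, fun t ht => ?_, hleft, hright, hbij⟩
  · simpa only [arrivalTime_one] using hinv.1 ⟨zero_lt_one, one_lt_cbrt_two⟩
  · have hut := hbij.mapsTo ht
    rw [← inv_three_halves_mul_tminIntegrand hut.1.le (two_sub_pow_three_pos hut.1.le hut.2).le]
    exact hderiv t ht
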